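/- arXiv:1208.5151 — 2 statements merged into one kernel-verified Lean document; each statement's English description precedes it below -/
import Mathlib

section
/- The sequence n ↦ |B_{2n+2}|^(1/(n+1)) / |B_{2n}|^(1/n) is strictly decreasing for all n ≥ 2, where B_k is the k-th Bernoulli number. -/
/-!
With `a n = log |B_{2n}|` the ratio is `exp (a (n + 1) / (n + 1) - a n / n)`, so one needs strict
concavity of `n ↦ a n / n` for `n ≥ 2`. By Euler's formula
`a n = log 2 + log (2n)! - 2n log (2π) + log ζ(2n)`. The affine part only contributes a constant to
the (cleared) second difference; the factorial part has concave increments `log ((2n+1)(2n+2))`,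
so its contribution decreases in `n` and is already `< -2 - 2 log 2` at `n = 2`; and
`0 ≤ log ζ(2n) ≤ ζ(2n) - 1 = O(4⁻ⁿ)` contributes at most `2`.
-/

open Real
open scoped Nat

/-- `n (n + 1) (n + 2)` times the second difference of `k ↦ a k / k` at `n`. -/
def scaledSecondDiff (a : ℕ → ℝ) (n : ℕ) : ℝ :=
  (n + 1) * (n + 2) * a n - 2 * n * (n + 2) * a (n + 1) + n * (n + 1) * a (n + 2)

section scaledSecondDiff

variable (a : ℕ → ℝ)

lemma sub_lt_sub_of_scaledSecondDiff_neg {n : ℕ} (hn : n ≠ 0) (h : scaledSecondDiff a n < 0) :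
    a (n + 2) / (n + 2 : ℕ) - a (n + 1) / (n + 1 : ℕ) <
      a (n + 1) / (n + 1 : ℕ) - a n / n := by
  have hn' : (0 : ℝ) < n := by positivity
  have hdiff : a (n + 1) / (n + 1 : ℕ) - a n / n -
      (a (n + 2) / (n + 2 : ℕ) - a (n + 1) / (n + 1 : ℕ)) =
        -scaledSecondDiff a n / (n * (n + 1) * (n + 2)) := by
    unfold scaledSecondDiff
    push_cast
    field_simp
    ring
  rw [← sub_pos, hdiff]
  exact div_pos (by linarith) (by positivity)

lemma antitone_scaledSecondDiff
    (h : ∀ n, a (n + 3) - 3 * a (n + 2) + 3 * a (n + 1) - a n ≤ 0) :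
    Antitone (scaledSecondDiff a) := by
  refine antitone_nat_of_succ_le fun n => ?_
  have hstep : scaledSecondDiff a (n + 1) - scaledSecondDiff a n =
      (n + 1) * (n + 2) * (a (n + 3) - 3 * a (n + 2) + 3 * a (n + 1) - a n) := by
    unfold scaledSecondDiff
    push_cast
    ring
  nlinarith [h n, (by positivity : (0 : ℝ) ≤ (n + 1) * (n + 2))]

end scaledSecondDiff

/-- `ζ(2n) - 1`. -/
noncomputable def zetaTail (n : ℕ) : ℝ := ∑' m : ℕ, 1 / ((m : ℝ) + 2) ^ (2 * n)

lemma hasSum_zetaTail {n : ℕ} (hn : n ≠ 0) {S : ℝ}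
    (h : HasSum (fun m : ℕ => 1 / (m : ℝ) ^ (2 * n)) S) :
    HasSum (fun m : ℕ => 1 / ((m : ℝ) + 2) ^ (2 * n)) (S - 1) := by
  simpa [Finset.sum_range_succ, hn] using (hasSum_nat_add_iff' 2).mpr h

lemma zetaTail_eq {n : ℕ} (hn : n ≠ 0) {S : ℝ}
    (h : HasSum (fun m : ℕ => 1 / (m : ℝ) ^ (2 * n)) S) : zetaTail n = S - 1 :=
  (hasSum_zetaTail hn h).tsum_eq

lemma zetaTail_nonneg (n : ℕ) : 0 ≤ zetaTail n :=
  tsum_nonneg fun m => by positivity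

lemma zetaTail_two : zetaTail 2 = π ^ 4 / 90 - 1 :=
  zetaTail_eq two_ne_zero hasSum_zeta_four

lemma zetaTail_succ_le {n : ℕ} (hn : n ≠ 0) : zetaTail (n + 1) ≤ zetaTail n / 4 := by
  rw [zetaTail, zetaTail, ← tsum_div_const]
  refine Summable.tsum_le_tsum (fun m => ?_)
    (hasSum_zetaTail n.succ_ne_zero (hasSum_zeta_nat n.succ_ne_zero)).summable
    ((hasSum_zetaTail hn (hasSum_zeta_nat hn)).summable.div_const 4)
  have h4 : (4 : ℝ) ≤ ((m : ℝ) + 2) ^ 2 := by nlinarith [m.cast_nonneg (α := ℝ)]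
  rw [div_div, mul_add_one, pow_add]
  gcongr

lemma mul_zetaTail_le_one {n : ℕ} (hn : 2 ≤ n) : (n + 1) * (n + 2) * zetaTail n ≤ 1 := by
  induction n, hn using Nat.le_induction with
  | base =>
    have hπ : π ^ 4 < 3.1416 ^ 4 := by gcongr; exact pi_lt_d4
    rw [zetaTail_two]
    norm_num at hπ ⊢
    linarith
  | succ n hn ih =>
    have ht := zetaTail_nonneg n
    push_cast
    calc (n + 1 + 1 : ℝ) * (n + 1 + 2) * zetaTail (n + 1)
        ≤ (n + 2) * (n + 3) * (zetaTail n / 4) := by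
          rw [show (n + 1 + 1 : ℝ) * (n + 1 + 2) = (n + 2) * (n + 3) by ring]
          gcongr
          exact zetaTail_succ_le (by omega)
      _ ≤ (n + 1) * (n + 2) * zetaTail n := by
          nlinarith [mul_nonneg (by positivity : (0 : ℝ) ≤ (n + 2) * (3 * n + 1)) ht]
      _ ≤ 1 := ih

lemma one_add_zetaTail {n : ℕ} (hn : n ≠ 0) :
    1 + zetaTail n =
      (-1) ^ (n + 1) * 2 ^ (2 * n - 1) * π ^ (2 * n) * bernoulli (2 * n) / (2 * n)! := by
  rw [zetaTail_eq hn (hasSum_zeta_nat hn)]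
  ring

lemma abs_bernoulli_two_mul {n : ℕ} (hn : n ≠ 0) :
    |(bernoulli (2 * n) : ℝ)| = 2 * (2 * n)! / (2 * π) ^ (2 * n) * (1 + zetaTail n) := by
  have hpos : 0 < 1 + zetaTail n := by linarith [zetaTail_nonneg n]
  have h := congrArg abs (one_add_zetaTail hn)
  rw [abs_of_pos hpos, abs_div, abs_mul, abs_mul, abs_mul, abs_pow, abs_neg, abs_one, one_pow,
    one_mul, abs_of_pos (by positivity : (0 : ℝ) < 2 ^ (2 * n - 1)),
    abs_of_pos (by positivity : (0 : ℝ) < π ^ (2 * n)), Nat.abs_cast] at h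
  have h2 : (2 : ℝ) ^ (2 * n) = 2 * 2 ^ (2 * n - 1) := by
    rw [← pow_succ']; congr 1; omega
  rw [h, mul_pow, h2]
  field_simp

lemma abs_bernoulli_two_mul_pos {n : ℕ} (hn : n ≠ 0) : 0 < |(bernoulli (2 * n) : ℝ)| := by
  rw [abs_bernoulli_two_mul hn]
  have := zetaTail_nonneg n
  positivity

lemma log_abs_bernoulli_two_mul {n : ℕ} (hn : n ≠ 0) :
    log |(bernoulli (2 * n) : ℝ)| =
      log 2 + log (2 * n)! - 2 * n * log (2 * π) + log (1 + zetaTail n) := by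
  have := zetaTail_nonneg n
  rw [abs_bernoulli_two_mul hn, log_mul (by positivity) (by positivity),
    log_div (by positivity) (by positivity), log_mul (by positivity) (by positivity), log_pow]
  push_cast
  ring

lemma log_factorial_two_mul_succ (n : ℕ) :
    log (2 * (n + 1))! = log (2 * n)! + log ((2 * n + 1) * (2 * n + 2)) := by
  rw [show 2 * (n + 1) = 2 * n + 1 + 1 by ring, Nat.factorial_succ, Nat.factorial_succ]
  push_cast
  rw [← log_mul (by positivity) (by positivity)]
  ring_nf

lemma antitone_scaledSecondDiff_log_factorial_two_mul :
    Antitone (scaledSecondDiff fun n => log (2 * n)!) := by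
  refine antitone_scaledSecondDiff _ fun n => ?_
  have hconcave : log ((2 * n + 5) * (2 * n + 6) * ((2 * n + 1) * (2 * n + 2)) : ℝ) ≤
      log (((2 * n + 3) * (2 * n + 4)) ^ 2 : ℝ) :=
    log_le_log (by positivity) (by nlinarith)
  rw [log_mul (by positivity) (by positivity), log_pow] at hconcave
  simp only [log_factorial_two_mul_succ, show ∀ k, k + 2 = k + 1 + 1 from fun _ => rfl]
  push_cast
  ring_nf at hconcave ⊢
  linarith

lemma scaledSecondDiff_log_factorial_two_mul_two :
    scaledSecondDiff (fun n => log (2 * n)!) 2 < -2 - 2 * log 2 := by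
  norm_num [scaledSecondDiff, Nat.factorial]
  have he : exp 2 < 8 := by
    have := exp_one_lt_d9
    rw [show (2 : ℝ) = 1 + 1 by norm_num, exp_add]
    nlinarith [exp_pos 1]
  have hlog : 2 * log 2 + 12 * log 24 + 6 * log 40320 - 16 * log 720 =
      log (2 ^ 2 * 24 ^ 12 * 40320 ^ 6 / 720 ^ 16) := by
    rw [log_div (by norm_num) (by norm_num), log_mul (by norm_num) (by norm_num),
      log_mul (by norm_num) (by norm_num), log_pow, log_pow, log_pow, log_pow]
    push_cast
    ring
  have hbound : log (2 ^ 2 * 24 ^ 12 * 40320 ^ 6 / 720 ^ 16 : ℝ) < -2 := by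
    rw [log_lt_iff_lt_exp (by norm_num), exp_neg, lt_inv_comm₀ (by norm_num) (exp_pos 2)]
    refine he.trans_le ?_
    norm_num
  linarith

lemma scaledSecondDiff_log_one_add_zetaTail_le {n : ℕ} (hn : 2 ≤ n) :
    scaledSecondDiff (fun k => log (1 + zetaTail k)) n ≤ 2 := by
  have hlog_le (k : ℕ) : log (1 + zetaTail k) ≤ zetaTail k := by
    linarith [log_le_sub_one_of_pos (by linarith [zetaTail_nonneg k] : 0 < 1 + zetaTail k)]
  have hlog_nonneg (k : ℕ) : 0 ≤ log (1 + zetaTail k) :=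
    log_nonneg (by linarith [zetaTail_nonneg k])
  have htail : zetaTail (n + 2) ≤ zetaTail n := by
    linarith [zetaTail_succ_le (by omega : n ≠ 0), zetaTail_succ_le (by omega : n + 1 ≠ 0),
      zetaTail_nonneg n]
  have hsmall := mul_zetaTail_le_one hn
  have h₀ : (n + 1) * (n + 2) * log (1 + zetaTail n) ≤ (n + 1) * (n + 2) * zetaTail n := by
    gcongr; exact hlog_le n
  have h₁ : 0 ≤ 2 * n * (n + 2) * log (1 + zetaTail (n + 1)) := by
    have := hlog_nonneg (n + 1); positivity
  have h₂ : n * (n + 1) * log (1 + zetaTail (n + 2)) ≤ (n + 1) * (n + 2) * zetaTail n :=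
    calc n * (n + 1) * log (1 + zetaTail (n + 2))
        ≤ (n + 1) * (n + 2) * zetaTail (n + 2) := by
          gcongr ?_ * ?_
          · have := hlog_nonneg (n + 2); positivity
          · nlinarith
          · exact hlog_le _
      _ ≤ (n + 1) * (n + 2) * zetaTail n := by gcongr
  unfold scaledSecondDiff
  push_cast
  linarith

lemma scaledSecondDiff_log_abs_bernoulli_two_mul_neg {n : ℕ} (hn : 2 ≤ n) :
    scaledSecondDiff (fun k => log |(bernoulli (2 * k) : ℝ)|) n < 0 := by
  have hsplit : scaledSecondDiff (fun k => log |(bernoulli (2 * k) : ℝ)|) n =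
      2 * log 2 + scaledSecondDiff (fun k => log (2 * k)!) n +
        scaledSecondDiff (fun k => log (1 + zetaTail k)) n := by
    simp only [scaledSecondDiff, log_abs_bernoulli_two_mul (by omega : n ≠ 0),
      log_abs_bernoulli_two_mul (by omega : n + 1 ≠ 0),
      log_abs_bernoulli_two_mul (by omega : n + 2 ≠ 0)]
    push_cast
    ring
  rw [hsplit]
  linarith [antitone_scaledSecondDiff_log_factorial_two_mul hn,
    scaledSecondDiff_log_factorial_two_mul_two, scaledSecondDiff_log_one_add_zetaTail_le hn]

theorem bernoulli_root_ratio_strictAnti :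
    StrictAntiOn
      (fun n : ℕ =>
        |((bernoulli (2 * n + 2) : ℚ) : ℝ)| ^ (((n : ℝ) + 1)⁻¹) /
          |((bernoulli (2 * n) : ℚ) : ℝ)| ^ ((n : ℝ)⁻¹))
      {n : ℕ | 2 ≤ n} := by
  set a : ℕ → ℝ := fun k => log |(bernoulli (2 * k) : ℝ)|
  have hexp {n : ℕ} (hn : n ≠ 0) :
      |((bernoulli (2 * n + 2) : ℚ) : ℝ)| ^ (((n : ℝ) + 1)⁻¹) /
          |((bernoulli (2 * n) : ℚ) : ℝ)| ^ ((n : ℝ)⁻¹) =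
        exp (a (n + 1) / (n + 1 : ℕ) - a n / n) := by
    rw [show 2 * n + 2 = 2 * (n + 1) by ring,
      rpow_def_of_pos (abs_bernoulli_two_mul_pos n.succ_ne_zero),
      rpow_def_of_pos (abs_bernoulli_two_mul_pos hn), ← exp_sub]
    push_cast
    rfl
  refine strictAntiOn_of_succ_lt Set.ordConnected_Ici fun n _ (hn : 2 ≤ n) _ => ?_
  rw [Order.succ_eq_add_one, hexp (by omega), hexp (by omega), exp_lt_exp]
  exact sub_lt_sub_of_scaledSecondDiff_neg a (by omega)
    (scaledSecondDiff_log_abs_bernoulli_two_mul_neg hn)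
end

section
/- Define v_n = log|B_{2n}| where B_{2n} is the 2n-th Bernoulli number. Then for all n ≥ 3, v_{n+1}/(n+1) - v_n/n ≥ 1/n - log(n+1)/(2n²) - log(16π)/(2n(n+1)) - 1/(12n²) - 6/(2^{2n} n), and in particular v_{n+1}/(n+1) > v_n/n. -/
open Real in
/-- `v n = log |B_{2n}|`, with `B_k` the Bernoulli numbers. -/
noncomputable def vBern (n : ℕ) : ℝ := Real.log |((bernoulli (2 * n) : ℚ) : ℝ)|

/-
Euler's formula |B_{2k}| = 2 (2k)! ζ(2k) / (2π)^{2k} gives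
v_k = log 2 + log (2k)! + log ζ(2k) - 2k log 2π, so in n v_{n+1} - (n+1) v_n the terms in log 2π
cancel and what is left is -log 2 + n log ((2n+2)(2n+1)) - log (2n)! + n log ζ(2n+2) - (n+1) log ζ(2n).
Stirling's upper bound log m! ≤ (m + 1/2) log m - m + 1 (the Stirling sequence decreases from its
first term e/√2) and 1 ≤ ζ(2n) ≤ 1 + 4/4^n bound this from below by
2n - 1 - (3/2) log 2 - (log n)/2 - 4(n+1)/4^n, which for n ≥ 3 is positive and exceeds n(n+1) times
the claimed lower bound.
-/

open Real
open scoped Nat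

theorem one_le_tsum_one_div_nat_pow {p : ℕ} (hp : 1 < p) :
    1 ≤ ∑' m : ℕ, 1 / (m : ℝ) ^ p := by
  simpa using (Real.summable_one_div_nat_pow.2 hp).le_tsum 1 (fun m _ => by positivity)

theorem tsum_one_div_nat_pow_le {p : ℕ} (hp : 2 ≤ p) :
    ∑' m : ℕ, 1 / (m : ℝ) ^ p ≤ 1 + 4 / 2 ^ p := by
  obtain ⟨q, rfl⟩ := Nat.exists_eq_add_of_le' hp
  have hzeta_two : HasSum (fun m : ℕ => 1 / ((m + 2 : ℕ) : ℝ) ^ 2) (π ^ 2 / 6 - 1) := by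
    simpa [Finset.sum_range_succ] using (hasSum_nat_add_iff' 2).2 hasSum_zeta_two
  have hterm (m : ℕ) :
      1 / ((m + 2 : ℕ) : ℝ) ^ (q + 2) ≤ 4 / 2 ^ (q + 2) * (1 / ((m + 2 : ℕ) : ℝ) ^ 2) := by
    have : (2 : ℝ) ^ q ≤ ((m + 2 : ℕ) : ℝ) ^ q :=
      pow_le_pow_left₀ zero_le_two (by push_cast; linarith [m.cast_nonneg (α := ℝ)]) q
    rw [pow_add, pow_add]
    field_simp
    nlinarith [pow_pos (two_pos (α := ℝ)) q]
  have htail :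
      ∑' m : ℕ, 1 / ((m + 2 : ℕ) : ℝ) ^ (q + 2) ≤ 4 / 2 ^ (q + 2) * (π ^ 2 / 6 - 1) := by
    rw [← hzeta_two.tsum_eq, ← hzeta_two.summable.tsum_mul_left]
    exact Summable.tsum_le_tsum hterm
      ((Real.summable_one_div_nat_pow.2 (by omega)).comp_injective (add_left_injective 2))
      (hzeta_two.summable.mul_left _)
  have hhead : ∑ i ∈ Finset.range 2, 1 / (i : ℝ) ^ (q + 2) = 1 := by simp [Finset.sum_range_succ]
  have hpi : π ^ 2 / 6 - 1 ≤ 1 := by nlinarith [pi_lt_d2, pi_pos]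
  rw [← (Real.summable_one_div_nat_pow.2 (by omega)).sum_add_tsum_nat_add 2, hhead]
  nlinarith [show (0 : ℝ) ≤ 4 / 2 ^ (q + 2) by positivity]

theorem log_tsum_one_div_nat_pow_le {p : ℕ} (hp : 2 ≤ p) :
    log (∑' m : ℕ, 1 / (m : ℝ) ^ p) ≤ 4 / 2 ^ p := by
  have := log_le_sub_one_of_pos (by linarith [one_le_tsum_one_div_nat_pow (p := p) (by omega)])
  linarith [tsum_one_div_nat_pow_le hp]

theorem abs_bernoulli_two_mul_s14 {k : ℕ} (hk : k ≠ 0) :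
    |((bernoulli (2 * k) : ℚ) : ℝ)| =
      2 * (2 * k)! * (∑' m : ℕ, 1 / (m : ℝ) ^ (2 * k)) / (2 * π) ^ (2 * k) := by
  obtain ⟨j, rfl⟩ := Nat.exists_eq_succ_of_ne_zero hk
  have h := congrArg abs (hasSum_zeta_nat hk).tsum_eq
  rw [abs_of_pos (by linarith [one_le_tsum_one_div_nat_pow (p := 2 * (j + 1)) (by omega)])] at h
  rw [h, abs_div, abs_mul, abs_mul, abs_mul, abs_pow, abs_neg, abs_one, one_pow,
    abs_of_pos (by positivity : (0 : ℝ) < 2 ^ (2 * (j + 1) - 1)), abs_of_pos (pow_pos pi_pos _),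
    Nat.abs_cast, show 2 * (j + 1) - 1 = 2 * j + 1 by omega,
    show 2 * (j + 1) = 2 * j + 1 + 1 by ring]
  field_simp
  ring

theorem vBern_eq {k : ℕ} (hk : k ≠ 0) :
    vBern k = log 2 + log (2 * k)! + log (∑' m : ℕ, 1 / (m : ℝ) ^ (2 * k)) -
      2 * k * log (2 * π) := by
  have := one_le_tsum_one_div_nat_pow (p := 2 * k) (by omega)
  rw [vBern, abs_bernoulli_two_mul_s14 hk, log_div (by positivity) (by positivity),
    log_mul (by positivity) (by positivity), log_mul two_ne_zero (by positivity), log_pow]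
  push_cast
  ring

theorem log_factorial_le {m : ℕ} (hm : m ≠ 0) : log m ! ≤ (m + 1 / 2) * log m - m + 1 := by
  obtain ⟨j, rfl⟩ := Nat.exists_eq_succ_of_ne_zero hm
  have h := log_le_log (Stirling.stirlingSeq'_pos j)
    (Stirling.stirlingSeq'_antitone (Nat.zero_le j))
  simp only [Function.comp_apply, Nat.succ_eq_add_one, zero_add, Stirling.stirlingSeq_one,
    Stirling.log_stirlingSeq_formula] at h
  rw [log_div (exp_pos 1).ne' (by positivity), log_exp, log_sqrt zero_le_two,
    log_mul two_ne_zero (by positivity), log_div (by positivity) (exp_pos 1).ne', log_exp] at h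
  linarith

theorem stirling_bound_le_vBern_cross_diff {n : ℕ} (hn : n ≠ 0) :
    2 * n - 1 - 3 / 2 * log 2 - log n / 2 - 4 * (n + 1) / 2 ^ (2 * n) ≤
      n * vBern (n + 1) - (n + 1) * vBern n := by
  have hn0 : (0 : ℝ) < n := by positivity
  have hfac : log (2 * (n + 1))! = log (2 * n + 2) + log (2 * n + 1) + log (2 * n)! := by
    rw [show 2 * (n + 1) = 2 * n + 1 + 1 by ring, Nat.factorial_succ, Nat.factorial_succ]
    push_cast
    rw [log_mul (by positivity) (by positivity), log_mul (by positivity) (by positivity),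
      add_assoc _ (1 : ℝ) 1, one_add_one_eq_two, add_assoc]
  have hlog_two_mul : log 2 + log n = log (2 * n) := (log_mul two_ne_zero hn0.ne').symm
  have hfac_le : log (2 * n)! ≤ (2 * n + 1 / 2) * (log 2 + log n) - 2 * n + 1 := by
    have := log_factorial_le (m := 2 * n) (by omega)
    rwa [Nat.cast_mul, Nat.cast_two, ← hlog_two_mul] at this
  have hlog_add_two : log 2 + log n ≤ log (2 * n + 2) :=
    hlog_two_mul ▸ log_le_log (by positivity) (by linarith)
  have hlog_add_one : log 2 + log n ≤ log (2 * n + 1) :=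
    hlog_two_mul ▸ log_le_log (by positivity) (by linarith)
  have hzeta_succ : 0 ≤ log (∑' m : ℕ, 1 / (m : ℝ) ^ (2 * (n + 1))) :=
    log_nonneg (one_le_tsum_one_div_nat_pow (by omega))
  have hzeta : (n + 1) * log (∑' m : ℕ, 1 / (m : ℝ) ^ (2 * n)) ≤ 4 * (n + 1) / 2 ^ (2 * n) :=
    calc (n + 1) * log (∑' m : ℕ, 1 / (m : ℝ) ^ (2 * n)) ≤ (n + 1) * (4 / 2 ^ (2 * n)) :=
          mul_le_mul_of_nonneg_left (log_tsum_one_div_nat_pow_le (by omega)) (by positivity)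
      _ = 4 * (n + 1) / 2 ^ (2 * n) := by ring
  rw [vBern_eq hn, vBern_eq (k := n + 1) (by omega), hfac]
  push_cast
  nlinarith [mul_le_mul_of_nonneg_left hlog_add_two hn0.le,
    mul_le_mul_of_nonneg_left hlog_add_one hn0.le, mul_nonneg hn0.le hzeta_succ]

theorem sixteen_mul_succ_le_two_pow {n : ℕ} (hn : 3 ≤ n) : 16 * (n + 1) ≤ 2 ^ (2 * n) := by
  induction n, hn using Nat.le_induction with
  | base => norm_num
  | succ n hn ih =>
    rw [show 2 * (n + 1) = 2 * n + 2 by ring, pow_add]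
    omega

theorem vBern_cross_diff_pos {n : ℕ} (hn : 3 ≤ n) :
    0 < n * vBern (n + 1) - (n + 1) * vBern n := by
  have hn3 : (3 : ℝ) ≤ n := by exact_mod_cast hn
  have hsmall : 16 * ((n : ℝ) + 1) ≤ 2 ^ (2 * n) := by
    exact_mod_cast sixteen_mul_succ_le_two_pow hn
  have htail : 4 * ((n : ℝ) + 1) / 2 ^ (2 * n) ≤ 1 / 4 := by
    rw [div_le_iff₀ (by positivity)]
    linarith
  linarith [stirling_bound_le_vBern_cross_diff (n := n) (by omega), log_two_lt_d9,
    log_le_sub_one_of_pos (by positivity : (0 : ℝ) < n)]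

theorem first_diff_bound_mul_le_vBern_cross_diff {n : ℕ} (hn : 2 ≤ n) :
    (n + 1) - (n + 1) * log (n + 1) / (2 * n) - log (16 * π) / 2 - (n + 1) / (12 * n) -
        6 * (n + 1) / 2 ^ (2 * n) ≤ n * vBern (n + 1) - (n + 1) * vBern n := by
  have hn2 : (2 : ℝ) ≤ n := by exact_mod_cast hn
  have hlog_sixteen_pi : 4 * log 2 ≤ log (16 * π) := by
    have := log_le_log (by norm_num) (by nlinarith [pi_gt_three] : (2 : ℝ) ^ 4 ≤ 16 * π)
    rwa [log_pow, Nat.cast_ofNat] at this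
  have hlog_succ : log n / 2 ≤ (n + 1) * log (n + 1) / (2 * n) := by
    have := log_le_log (by positivity) (by linarith : (n : ℝ) ≤ n + 1)
    have := log_nonneg (by linarith : (1 : ℝ) ≤ n + 1)
    rw [div_le_div_iff₀ two_pos (by positivity)]
    nlinarith
  have : 0 ≤ ((n : ℝ) + 1) / (12 * n) := by positivity
  have : 4 * ((n : ℝ) + 1) / 2 ^ (2 * n) ≤ 6 * (n + 1) / 2 ^ (2 * n) := by gcongr; norm_num
  linarith [stirling_bound_le_vBern_cross_diff (n := n) (by omega), log_pos one_lt_two]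

open Real in
theorem bernoulli_first_diff_bound (n : ℕ) (hn : 3 ≤ n) :
    vBern (n + 1) / ((n : ℝ) + 1) - vBern n / n ≥
        1 / (n : ℝ) - Real.log ((n : ℝ) + 1) / (2 * (n : ℝ) ^ 2) -
          Real.log (16 * π) / (2 * (n : ℝ) * ((n : ℝ) + 1)) - 1 / (12 * (n : ℝ) ^ 2) -
          6 / (2 ^ (2 * n) * (n : ℝ)) ∧
      vBern (n + 1) / ((n : ℝ) + 1) > vBern n / n := by
  have hdiff : vBern (n + 1) / ((n : ℝ) + 1) - vBern n / n
      = (n * vBern (n + 1) - (n + 1) * vBern n) / (n * (n + 1)) := by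
    field_simp
  have hbound : 1 / (n : ℝ) - log ((n : ℝ) + 1) / (2 * (n : ℝ) ^ 2) -
        log (16 * π) / (2 * (n : ℝ) * ((n : ℝ) + 1)) - 1 / (12 * (n : ℝ) ^ 2) -
        6 / (2 ^ (2 * n) * (n : ℝ))
      = ((n + 1) - (n + 1) * log (n + 1) / (2 * n) - log (16 * π) / 2 - (n + 1) / (12 * n)
          - 6 * (n + 1) / 2 ^ (2 * n)) / (n * (n + 1)) := by
    field_simp
  refine ⟨?_, ?_⟩
  · rw [ge_iff_le, hbound, hdiff]
    exact div_le_div_of_nonneg_right (first_diff_bound_mul_le_vBern_cross_diff (by omega)) (by positivity)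
  · rw [gt_iff_lt, ← sub_pos, hdiff]
    exact div_pos (vBern_cross_diff_pos hn) (by positivity)
end
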